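/- Define on the space of polynomials in z with a reflection operator (R̆f)(z) = f(-z), the operators J₀ = z·d/dz + a + c - 1/2, J₋ = d/dz + (c-1/2)(1-R̆)/z, J₊ = z²·d/dz + 2az + (c-1/2)z(1-R̆). Then acting on the monomial basis v_{2n} = √((a)_n(a+c)_n/((c)_n n!))·z^{2n} and v_{2n+1} = √((a)_{n+1}(a+c)_n/((c)_{n+1} n!))·z^{2n+1} (a, c > 0): J₀v_m = (m+a+c-1/2)v_m; J₊v_{2n} = √((2n+2a)(2n+2c))v_{2n+1}; J₊v_{2n+1} = √((2n+2)(2n+2a+2c))v_{2n+2}; J₋v_{2n} = √(2n(2n+2a+2c-2))v_{2n-1}; J₋v_{2n+1} = √((2n+2a)(2n+2c))v_{2n}. -/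

import Mathlib

open Polynomial

/-- Real Pochhammer symbol `(α)_k = α(α+1)⋯(α+k-1)`. -/
noncomputable def rpoch (α : ℝ) (k : ℕ) : ℝ := ∏ j ∈ Finset.range k, (α + j)

/-- The reflection operator `(R̆f)(z) = f(-z)` on polynomials. -/
noncomputable def Rbr (p : Polynomial ℂ) : Polynomial ℂ := p.comp (-Polynomial.X)

/-- `J₀ = z·d/dz + a + c - 1/2`. -/
noncomputable def J0op (a c : ℝ) (p : Polynomial ℂ) : Polynomial ℂ :=
  Polynomial.X * Polynomial.derivative p + Polynomial.C ((a : ℂ) + c - 1 / 2) * p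

/-- `J₋ = d/dz + (c-1/2)(1-R̆)/z`; since `p - R̆p` has zero constant term,
division by `z` is realized by `Polynomial.divX`. -/
noncomputable def Jmop (a c : ℝ) (p : Polynomial ℂ) : Polynomial ℂ :=
  Polynomial.derivative p + Polynomial.C ((c : ℂ) - 1 / 2) * (p - Rbr p).divX

/-- `J₊ = z²·d/dz + 2az + (c-1/2)z(1-R̆)`. -/
noncomputable def Jpop (a c : ℝ) (p : Polynomial ℂ) : Polynomial ℂ :=
  Polynomial.X ^ 2 * Polynomial.derivative p + Polynomial.C (2 * (a : ℂ)) * Polynomial.X * p +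
    Polynomial.C ((c : ℂ) - 1 / 2) * Polynomial.X * (p - Rbr p)

/-- The normalized monomial basis:
`v_{2n} = √((a)_n(a+c)_n/((c)_n n!))·z^{2n}`,
`v_{2n+1} = √((a)_{n+1}(a+c)_n/((c)_{n+1} n!))·z^{2n+1}`. -/
noncomputable def vmon (a c : ℝ) (m : ℕ) : Polynomial ℂ :=
  if m % 2 = 0 then
    Polynomial.C ((Real.sqrt (rpoch a (m / 2) * rpoch (a + c) (m / 2) /
      (rpoch c (m / 2) * (m / 2).factorial)) : ℂ)) * Polynomial.X ^ m
  else
    Polynomial.C ((Real.sqrt (rpoch a (m / 2 + 1) * rpoch (a + c) (m / 2) /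
      (rpoch c (m / 2 + 1) * (m / 2).factorial)) : ℂ)) * Polynomial.X ^ m

/-!
Since `R̆` acts on `z^m` by the sign `(-1)^m`, the operators `J₀`, `J₊`, `J₋` map `z^m` to
multiples of `z^m`, `z^{m+1}`, `z^{m-1}`. Each identity thus reduces to an identity
`x·√w = √y·√w'` of real coefficients, which after squaring is the one-step recurrence of the
Pochhammer weights `w` under the square roots in `v_m`.
-/

lemma rpoch_succ (α : ℝ) (k : ℕ) : rpoch α (k + 1) = rpoch α k * (α + k) :=
  Finset.prod_range_succ _ _

lemma mul_sqrt_eq_sqrt_mul_sqrt {x y A B : ℝ} (hx : 0 ≤ x) (hy : 0 ≤ y)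
    (h : x ^ 2 * A = y * B) : x * √A = √y * √B := by
  rw [← Real.sqrt_mul hy, ← h, Real.sqrt_mul (sq_nonneg x), Real.sqrt_sq hx]

lemma C_mul_C_mul_X_pow_of_mul_eq {x s y u : ℝ} (h : x * s = y * u) (k : ℕ) :
    C (x : ℂ) * (C (s : ℂ) * X ^ k) = C (y : ℂ) * (C (u : ℂ) * X ^ k) := by
  simp only [← mul_assoc, ← C_mul, ← Complex.ofReal_mul, h]

lemma two_mul_C_half : (2 : ℂ[X]) * C (1 / 2) = 1 := by
  rw [← map_ofNat C 2, ← C_mul]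
  norm_num

lemma X_mul_derivative_X_pow {R : Type*} [CommSemiring R] (m : ℕ) :
    X * derivative (X ^ m : R[X]) = (m : R[X]) * X ^ m := by
  rcases m with _ | k
  · simp
  · rw [derivative_X_pow, Nat.add_sub_cancel, pow_succ, map_natCast]
    ring

section Monomials

variable (a c : ℝ) (t : ℂ) (m : ℕ)

lemma Rbr_C_mul_X_pow_two_mul : Rbr (C t * X ^ (2 * m)) = C t * X ^ (2 * m) := by
  simp only [Rbr, mul_comp, C_comp, pow_comp, X_comp, Even.neg_pow (even_two_mul m)]

lemma Rbr_C_mul_X_pow_two_mul_add_one :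
    Rbr (C t * X ^ (2 * m + 1)) = -(C t * X ^ (2 * m + 1)) := by
  simp only [Rbr, mul_comp, C_comp, pow_comp, X_comp, Odd.neg_pow (odd_two_mul_add_one m),
    mul_neg]

lemma J0op_C_mul_X_pow :
    J0op a c (C t * X ^ m) = C ((m : ℂ) + a + c - 1 / 2) * (C t * X ^ m) := by
  rw [J0op, derivative_C_mul]
  simp only [map_add, map_sub, map_natCast]
  linear_combination C t * X_mul_derivative_X_pow (R := ℂ) m

lemma Jpop_C_mul_X_pow_two_mul :
    Jpop a c (C t * X ^ (2 * m)) = C ((2 * m + 2 * a : ℝ) : ℂ) * (C t * X ^ (2 * m + 1)) := by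
  rw [Jpop, Rbr_C_mul_X_pow_two_mul, sub_self, mul_zero, add_zero, derivative_C_mul]
  push_cast
  simp only [map_add, map_mul, map_natCast, map_ofNat]
  have h := X_mul_derivative_X_pow (R := ℂ) (2 * m)
  push_cast at h
  linear_combination (C t * X) * h

lemma Jpop_C_mul_X_pow_two_mul_add_one :
    Jpop a c (C t * X ^ (2 * m + 1)) =
      C ((2 * m + 2 * a + 2 * c : ℝ) : ℂ) * (C t * X ^ (2 * m + 2)) := by
  rw [Jpop, Rbr_C_mul_X_pow_two_mul_add_one, sub_neg_eq_add, derivative_C_mul]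
  push_cast
  simp only [map_add, map_sub, map_mul, map_natCast, map_ofNat]
  have h := X_mul_derivative_X_pow (R := ℂ) (2 * m + 1)
  push_cast at h
  linear_combination (C t * X) * h + (-C t * X ^ (2 * m + 2)) * two_mul_C_half

lemma Jmop_C_mul_X_pow_two_mul :
    Jmop a c (C t * X ^ (2 * m)) = C ((2 * m : ℝ) : ℂ) * (C t * X ^ (2 * m - 1)) := by
  rw [Jmop, Rbr_C_mul_X_pow_two_mul, sub_self, divX_zero, mul_zero, add_zero, derivative_C_mul,
    derivative_X_pow]
  push_cast
  ring

lemma Jmop_C_mul_X_pow_two_mul_add_one :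
    Jmop a c (C t * X ^ (2 * m + 1)) = C ((2 * m + 2 * c : ℝ) : ℂ) * (C t * X ^ (2 * m)) := by
  rw [Jmop, Rbr_C_mul_X_pow_two_mul_add_one, sub_neg_eq_add, ← two_mul, ← map_ofNat C 2,
    ← mul_assoc, ← C_mul, divX_C_mul_X_pow, if_neg (by omega), derivative_C_mul,
    derivative_X_pow, Nat.add_sub_cancel]
  push_cast
  simp only [map_add, map_sub, map_mul, map_natCast, map_ofNat, map_one]
  linear_combination (-C t * X ^ (2 * m)) * two_mul_C_half

end Monomials

section Weights

variable (a c : ℝ) (n : ℕ)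

noncomputable def evenWeight : ℝ := rpoch a n * rpoch (a + c) n / (rpoch c n * n.factorial)

noncomputable def oddWeight : ℝ :=
  rpoch a (n + 1) * rpoch (a + c) n / (rpoch c (n + 1) * n.factorial)

lemma vmon_two_mul : vmon a c (2 * n) = C (√(evenWeight a c n) : ℂ) * X ^ (2 * n) := by
  simp [vmon, evenWeight]

lemma vmon_two_mul_add_one :
    vmon a c (2 * n + 1) = C (√(oddWeight a c n) : ℂ) * X ^ (2 * n + 1) := by
  simp [vmon, oddWeight, Nat.add_mod, Nat.add_div]

lemma oddWeight_eq (hc : 0 < c) :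
    oddWeight a c n = evenWeight a c n * ((a + n) / (c + n)) := by
  have : c + n ≠ 0 := by positivity
  simp only [oddWeight, evenWeight, rpoch_succ]
  field_simp

lemma evenWeight_succ :
    evenWeight a c (n + 1) = oddWeight a c n * ((a + c + n) / (n + 1)) := by
  simp only [evenWeight, oddWeight, rpoch_succ (a + c), Nat.factorial_succ]
  push_cast
  rw [div_mul_div_comm]
  ring

end Weights

lemma J0op_vmon (a c : ℝ) (m : ℕ) :
    J0op a c (vmon a c m) = C ((m : ℂ) + a + c - 1 / 2) * vmon a c m := by
  unfold vmon
  split_ifs <;> exact J0op_C_mul_X_pow a c _ m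

section Ladder

variable {a c : ℝ} (n : ℕ)

lemma Jpop_vmon_two_mul (ha : 0 ≤ a) (hc : 0 < c) :
    Jpop a c (vmon a c (2 * n)) =
      C (√((2 * n + 2 * a) * (2 * n + 2 * c)) : ℂ) * vmon a c (2 * n + 1) := by
  rw [vmon_two_mul, vmon_two_mul_add_one, Jpop_C_mul_X_pow_two_mul]
  refine C_mul_C_mul_X_pow_of_mul_eq
    (mul_sqrt_eq_sqrt_mul_sqrt (by positivity) (by positivity) ?_) _
  have : c + n ≠ 0 := by positivity
  rw [oddWeight_eq a c n hc]
  field_simp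
  ring

lemma Jpop_vmon_two_mul_add_one (hac : 0 ≤ a + c) :
    Jpop a c (vmon a c (2 * n + 1)) =
      C (√((2 * n + 2 : ℝ) * (2 * n + 2 * a + 2 * c)) : ℂ) * vmon a c (2 * n + 2) := by
  rw [vmon_two_mul_add_one, show 2 * n + 2 = 2 * (n + 1) by ring, vmon_two_mul,
    Jpop_C_mul_X_pow_two_mul_add_one]
  have hx : (0 : ℝ) ≤ 2 * n + 2 * a + 2 * c := by linarith [(n.cast_nonneg : (0 : ℝ) ≤ n)]
  refine C_mul_C_mul_X_pow_of_mul_eq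
    (mul_sqrt_eq_sqrt_mul_sqrt hx (mul_nonneg (by positivity) hx) ?_) _
  rw [evenWeight_succ]
  field_simp
  ring

lemma Jmop_vmon_two_mul (hac : 0 ≤ a + c) :
    Jmop a c (vmon a c (2 * n)) =
      C (√((2 * n : ℝ) * (2 * n + 2 * a + 2 * c - 2)) : ℂ) * vmon a c (2 * n - 1) := by
  rw [vmon_two_mul, Jmop_C_mul_X_pow_two_mul]
  rcases n with _ | k
  · simp
  · rw [show 2 * (k + 1) - 1 = 2 * k + 1 by omega, vmon_two_mul_add_one]
    have hy : (0 : ℝ) ≤ 2 * (k + 1 : ℕ) + 2 * a + 2 * c - 2 := by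
      push_cast
      linarith [(k.cast_nonneg : (0 : ℝ) ≤ k)]
    refine C_mul_C_mul_X_pow_of_mul_eq
      (mul_sqrt_eq_sqrt_mul_sqrt (by positivity) (mul_nonneg (by positivity) hy) ?_) _
    rw [evenWeight_succ]
    push_cast
    field_simp
    ring

lemma Jmop_vmon_two_mul_add_one (ha : 0 ≤ a) (hc : 0 < c) :
    Jmop a c (vmon a c (2 * n + 1)) =
      C (√((2 * n + 2 * a) * (2 * n + 2 * c)) : ℂ) * vmon a c (2 * n) := by
  rw [vmon_two_mul_add_one, vmon_two_mul, Jmop_C_mul_X_pow_two_mul_add_one]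
  refine C_mul_C_mul_X_pow_of_mul_eq
    (mul_sqrt_eq_sqrt_mul_sqrt (by positivity) (by positivity) ?_) _
  have : c + n ≠ 0 := by positivity
  rw [oddWeight_eq a c n hc]
  field_simp
  ring

end Ladder

/-- At `n = 0` the index `2 * n - 1` truncates to `0`; the identity for `J₋ v₀` still reads
`0 = 0` because its coefficient is `√0`. -/
theorem differential_reflection_realization (a c : ℝ) (ha : 0 < a) (hc : 0 < c) (n : ℕ) :
    (∀ m : ℕ, J0op a c (vmon a c m) = Polynomial.C ((m : ℂ) + a + c - 1 / 2) * vmon a c m) ∧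
    Jpop a c (vmon a c (2 * n)) =
      Polynomial.C ((Real.sqrt ((2 * n + 2 * a) * (2 * n + 2 * c)) : ℂ)) *
        vmon a c (2 * n + 1) ∧
    Jpop a c (vmon a c (2 * n + 1)) =
      Polynomial.C ((Real.sqrt ((2 * n + 2 : ℝ) * (2 * n + 2 * a + 2 * c)) : ℂ)) *
        vmon a c (2 * n + 2) ∧
    Jmop a c (vmon a c (2 * n)) =
      Polynomial.C ((Real.sqrt ((2 * n : ℝ) * (2 * n + 2 * a + 2 * c - 2)) : ℂ)) *
        vmon a c (2 * n - 1) ∧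
    Jmop a c (vmon a c (2 * n + 1)) =
      Polynomial.C ((Real.sqrt ((2 * n + 2 * a) * (2 * n + 2 * c)) : ℂ)) *
        vmon a c (2 * n) := by
  have hac : 0 ≤ a + c := by positivity
  exact ⟨J0op_vmon a c, Jpop_vmon_two_mul n ha.le hc, Jpop_vmon_two_mul_add_one n hac,
    Jmop_vmon_two_mul n hac, Jmop_vmon_two_mul_add_one n ha.le hc⟩
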